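/- The Veronese map pulls back the round metric to the Adler–Taylor metric: for every a ∈ A, the function x ↦ sqrt(λ_a(x)) is differentiable with directional derivative at x in direction u equal to sqrt(λ_a(x))·⟨a − μ(x), u⟩; consequently Σ_{a∈A} (D_x sqrt(λ_a)(u))² = g_x(u) for all x, u ∈ ℝ^m. -/

import Mathlib

open scoped BigOperators RealInnerProductSpace
open Finset

noncomputable section

/-- `ℝ^m` with the standard (Euclidean) inner product. -/
abbrev Vm (m : ℕ) := EuclideanSpace ℝ (Fin m)

/-- The diagonal covariance `K(x) = Σ_{a∈A} α_a² exp(2⟨a,x⟩)`. -/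
def covK {m : ℕ} (A : Finset (Vm m)) (α : Vm m → ℝ) (x : Vm m) : ℝ :=
  ∑ a ∈ A, (α a) ^ 2 * Real.exp (2 * ⟪a, x⟫)

/-- The potential `Φ(x) = (1/2) log K(x)`. -/
def pot {m : ℕ} (A : Finset (Vm m)) (α : Vm m → ℝ) (x : Vm m) : ℝ :=
  (1 / 2) * Real.log (covK A α x)

/-- The weights `λ_a(x) = α_a² exp(2⟨a,x⟩)/K(x)`. -/
def wt {m : ℕ} (A : Finset (Vm m)) (α : Vm m → ℝ) (a x : Vm m) : ℝ :=
  (α a) ^ 2 * Real.exp (2 * ⟪a, x⟫) / covK A α x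

/-- The moment map `μ(x) = Σ_{a∈A} λ_a(x) • a`. -/
def mmap {m : ℕ} (A : Finset (Vm m)) (α : Vm m → ℝ) (x : Vm m) : Vm m :=
  ∑ a ∈ A, wt A α a x • a

/-- The Adler–Taylor quadratic form `g_x(v) = Σ_{a∈A} λ_a(x)·⟨a − μ(x), v⟩²`. -/
def atForm {m : ℕ} (A : Finset (Vm m)) (α : Vm m → ℝ) (x v : Vm m) : ℝ :=
  ∑ a ∈ A, wt A α a x * ⟪a - mmap A α x, v⟫ ^ 2

/-! Writing `λ_a = α_a² e^{2⟨a,x⟩} / K`, one has `√λ_a(x) = α_a exp(⟨a,x⟩ − Φ(x))`, and the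
potential has gradient `∇Φ = ∇K / (2K) = μ`. Hence `D_x √λ_a = √λ_a(x) ⟨a − μ(x), ·⟩`, and squaring
and summing over `a` gives `Σ_a λ_a(x) ⟨a − μ(x), u⟩² = g_x(u)`. -/

section

open Real

variable {m : ℕ} {A : Finset (Vm m)} {α : Vm m → ℝ}

lemma covK_nonneg (x : Vm m) : 0 ≤ covK A α x :=
  sum_nonneg fun a _ => by positivity

lemma covK_pos (hA : A.Nonempty) (hα : ∀ a ∈ A, α a ≠ 0) (x : Vm m) : 0 < covK A α x :=
  sum_pos (fun a ha => mul_pos (sq_pos_of_ne_zero (hα a ha)) (exp_pos _)) hA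

lemma wt_nonneg (a x : Vm m) : 0 ≤ wt A α a x :=
  div_nonneg (by positivity) (covK_nonneg x)

lemma mmap_eq_inv_smul_sum (x : Vm m) :
    mmap A α x = (covK A α x)⁻¹ • ∑ a ∈ A, (α a ^ 2 * exp (2 * ⟪a, x⟫)) • a := by
  simp only [mmap, wt, smul_sum, smul_smul, div_eq_inv_mul]

lemma hasFDerivAt_covK (x : Vm m) :
    HasFDerivAt (covK A α)
      ((2 : ℝ) • innerSL ℝ (∑ a ∈ A, (α a ^ 2 * exp (2 * ⟪a, x⟫)) • a)) x := by
  have h : HasFDerivAt (covK A α)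
      (∑ a ∈ A, α a ^ 2 • exp (2 * ⟪a, x⟫) • (2 : ℝ) • innerSL ℝ a) x :=
    HasFDerivAt.fun_sum fun a _ =>
      (((innerSL ℝ a).hasFDerivAt.const_mul 2).exp).const_mul _
  refine h.congr_fderiv ?_
  ext v
  simp only [FunLike.coe_sum, Finset.sum_apply, smul_apply,
    innerSL_apply_apply, smul_eq_mul, sum_inner, real_inner_smul_left, mul_sum]
  exact sum_congr rfl fun a _ => by ring

lemma hasFDerivAt_pot {x : Vm m} (hK : covK A α x ≠ 0) :
    HasFDerivAt (pot A α) (innerSL ℝ (mmap A α x)) x := by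
  refine ((hasFDerivAt_covK x).log hK |>.const_mul (1 / 2)).congr_fderiv ?_
  rw [mmap_eq_inv_smul_sum, map_smul, smul_smul, smul_smul]
  congr 1
  field_simp

lemma exp_pot {x : Vm m} (hK : 0 < covK A α x) : exp (pot A α x) = √(covK A α x) := by
  rw [pot, sqrt_eq_rpow, rpow_def_of_pos hK, mul_comm]

lemma sqrt_wt_eq {a x : Vm m} (ha : 0 ≤ α a) (hK : 0 < covK A α x) :
    √(wt A α a x) = α a * exp (⟪a, x⟫ - pot A α x) := by
  have hsq : α a ^ 2 * exp (2 * ⟪a, x⟫) = (α a * exp ⟪a, x⟫) ^ 2 := by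
    rw [mul_pow, ← exp_nat_mul]; norm_num
  rw [wt, hsq, sqrt_div (sq_nonneg _), sqrt_sq (by positivity), ← exp_pot hK, exp_sub,
    mul_div_assoc]

variable (hA : A.Nonempty) (hα : ∀ a ∈ A, 0 < α a)
include hA hα

lemma hasFDerivAt_sqrt_wt {a : Vm m} (ha : a ∈ A) (x : Vm m) :
    HasFDerivAt (fun y => √(wt A α a y)) (√(wt A α a x) • innerSL ℝ (a - mmap A α x)) x := by
  have hK := covK_pos hA (fun b hb => (hα b hb).ne')
  have hE : HasFDerivAt (fun y => α a * exp (⟪a, y⟫ - pot A α y))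
      (α a • exp (⟪a, x⟫ - pot A α x) • (innerSL ℝ a - innerSL ℝ (mmap A α x))) x :=
    (((innerSL ℝ a).hasFDerivAt.sub (hasFDerivAt_pot (hK x).ne')).exp).const_mul (α a)
  rw [funext fun y => sqrt_wt_eq (hα a ha).le (hK y), sqrt_wt_eq (hα a ha).le (hK x), map_sub,
    ← smul_smul]
  exact hE

lemma sum_sq_fderiv_sqrt_wt (x u : Vm m) :
    ∑ a ∈ A, (fderiv ℝ (fun y => √(wt A α a y)) x u) ^ 2 = atForm A α x u := by
  refine sum_congr rfl fun a ha => ?_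
  rw [(hasFDerivAt_sqrt_wt hA hα ha x).fderiv, smul_apply, smul_eq_mul,
    innerSL_apply_apply, mul_pow, sq_sqrt (wt_nonneg a x)]

end

theorem statement11_general (m : ℕ) (A : Finset (Vm m)) (hA : A.Nonempty)
    (α : Vm m → ℝ) (hα : ∀ a ∈ A, 0 < α a) :
    (∀ a ∈ A, ∀ x : Vm m,
      HasFDerivAt (fun y => Real.sqrt (wt A α a y))
        (Real.sqrt (wt A α a x) • innerSL ℝ (a - mmap A α x)) x) ∧
    (∀ x u : Vm m,
      ∑ a ∈ A, (fderiv ℝ (fun y => Real.sqrt (wt A α a y)) x u) ^ 2 = atForm A α x u) :=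
  ⟨fun _ ha => hasFDerivAt_sqrt_wt hA hα ha, sum_sq_fderiv_sqrt_wt hA hα⟩

/-- The Veronese map pulls back the round metric to the Adler–Taylor
metric: each `x ↦ sqrt(λ_a(x))` is differentiable with differential
`v ↦ sqrt(λ_a(x))·⟨a − μ(x), v⟩`, and consequently
`Σ_{a∈A} (D_x sqrt(λ_a)(u))² = g_x(u)` for all `x, u`. -/
theorem statement11 (m : ℕ) (hm : 1 ≤ m) (A : Finset (Vm m)) (hA : A.Nonempty)
    (α : Vm m → ℝ) (hα : ∀ a ∈ A, 0 < α a) :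
    (∀ a ∈ A, ∀ x : Vm m,
      HasFDerivAt (fun y => Real.sqrt (wt A α a y))
        (Real.sqrt (wt A α a x) • innerSL ℝ (a - mmap A α x)) x) ∧
    (∀ x u : Vm m,
      ∑ a ∈ A, (fderiv ℝ (fun y => Real.sqrt (wt A α a y)) x u) ^ 2 = atForm A α x u) :=
  statement11_general m A hA α hα
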